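/- Let u₁ = (1, 0, 0), u₂ = (1/2, √3/2, 0) and e₃ = (0, 0, 1) in ℝ³, and let D̃₃ be the group generated by the reflection in the plane spanned by u₁ and e₃ (the plane y = 0) and the reflection in the plane spanned by u₂ and e₃. If L is a full-rank lattice in ℝ³ preserved by D̃₃, then there exist positive real numbers a, b such that, for the diagonal linear map D = diag(a, a, b), the lattice D⁻¹(L) is one of: L₍₃,₆₎ + ℤe₃; L₍₃,₆₎ᶜ + ℤe₃; L₍₃,₆₎ᶜ + ℤ(u₁ + e₃); or L₍₃,₆₎ᶜ + ℤ(u₂ + e₃). -/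

import Mathlib

noncomputable section

/-- `ℝ³`, as the space of triples of reals. -/
abbrev V3 := Fin 3 → ℝ

/-- A full-rank lattice in `ℝ³`. -/
def IsFullLattice (L : AddSubgroup V3) : Prop :=
  ∃ b : Module.Basis (Fin 3) ℝ V3,
    ∀ x, x ∈ L ↔ ∃ c : Fin 3 → ℤ, x = ∑ i, (c i : ℝ) • b i

/-- `u₁ = (1, 0, 0)`. -/
def u₁ : V3 := ![1, 0, 0]

/-- `u₂ = (1/2, √3/2, 0)`. -/
def u₂ : V3 := ![1 / 2, Real.sqrt 3 / 2, 0]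

/-- `e₃ = (0, 0, 1)`. -/
def e₃ : V3 := ![0, 0, 1]

/-- The lattice `L₍₃,₆₎ + ℤe₃`. -/
def triLat : Set V3 := {x | ∃ m n k : ℤ, x = m • u₁ + n • u₂ + k • e₃}

/-- The lattice `L₍₃,₆₎ᶜ + ℤe₃`. -/
def triCentredLat : Set V3 :=
  {x | ∃ m n k : ℤ, x = m • (u₁ + u₂) + n • ((2 : ℤ) • u₁ - u₂) + k • e₃}

/-- The lattice `L₍₃,₆₎ᶜ + ℤ(u₁ + e₃)`. -/
def triCentredLatU₁ : Set V3 :=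
  {x | ∃ m n k : ℤ, x = m • (u₁ + u₂) + n • ((2 : ℤ) • u₁ - u₂) + k • (u₁ + e₃)}

/-- The lattice `L₍₃,₆₎ᶜ + ℤ(u₂ + e₃)`. -/
def triCentredLatU₂ : Set V3 :=
  {x | ∃ m n k : ℤ, x = m • (u₁ + u₂) + n • ((2 : ℤ) • u₁ - u₂) + k • (u₂ + e₃)}

/-- The reflection in the plane `y = 0`, i.e. the plane spanned by `u₁` and `e₃`. -/
def reflPlaneU₁ : V3 → V3 := fun x => ![x 0, -(x 1), x 2]

/-- The reflection in the plane spanned by `u₂ = (1/2, √3/2, 0)` and `e₃`. -/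
def reflPlaneU₂ : V3 → V3 := fun x =>
  ![-(x 0) / 2 + (Real.sqrt 3 / 2) * x 1, (Real.sqrt 3 / 2) * x 0 + x 1 / 2, x 2]

/-!
Identify the plane `z = 0` with `ℂ`. Then `reflPlaneU₁` acts as complex conjugation and
`ρ = reflPlaneU₂ ∘ reflPlaneU₁` as multiplication by the cube root of unity `ζ - 1`, where
`ζ = e^{iπ/3}`, so the horizontal sublattice `P` of `L` is a `ℤ[ζ]`-module stable under
conjugation. If `P ∩ ℝ = aℤ`, the real parts of `z` and `ζ z` lie in `(a/2)ℤ` for `z ∈ P`, which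
squeezes `P` between `a ℤ[ζ]` and `(a/3)(2 - ζ) ℤ[ζ]`, a pair of index `3`: `P` is one of the
two. The heights of the points of `L` form a group `bℤ`, because `v + ρ v + ρ² v` is the vertical
vector of height `3 v₂` and the vertical points of `L` form a discrete group. After rescaling
by `diag(a, a, b)`, a point `w` of height `1` has horizontal part `p` with `(2 - ζ) p` and
`conj p - p` in `ℤ[ζ]`, which forces `p ∈ ℤ[ζ]`; the class of `p` modulo the horizontal lattice
is represented by `0`, `1` or `ζ`, giving the four lattices.
-/

open ComplexConjugate

lemma AddSubgroup.mem_of_zsmul_mem_of_not_three_dvd {G : Type*} [AddCommGroup G]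
    {P : AddSubgroup G} {g : G} {k : ℤ} (hk : ¬ 3 ∣ k) (hkg : k • g ∈ P) (h3g : (3 : ℤ) • g ∈ P) :
    g ∈ P := by
  obtain ⟨u, v, huv⟩ : ∃ u v : ℤ, u * k + v * 3 = 1 := by
    rcases (by omega : k % 3 = 1 ∨ k % 3 = 2) with h | h
    · exact ⟨1, -(k / 3), by omega⟩
    · exact ⟨-1, (k + 1) / 3, by omega⟩
  have := P.add_mem (P.zsmul_mem hkg u) (P.zsmul_mem h3g v)
  rwa [smul_smul, smul_smul, ← add_smul, huv, one_smul] at this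

lemma AddSubgroup.exists_pos_mem_iff_of_isolated (S : AddSubgroup ℝ) (hS : ∃ t ∈ S, t ≠ 0)
    {ε : ℝ} (hε : 0 < ε) (hd : ∀ t ∈ S, |t| < ε → t = 0) :
    ∃ a > 0, ∀ t, t ∈ S ↔ ∃ k : ℤ, t = k * a := by
  obtain ⟨a, rfl⟩ := AddSubgroup.cyclic_of_isolated_zero hε <| Set.disjoint_left.2
    fun t ht hmem => hmem.1.ne' (hd t ht (by rw [abs_of_pos hmem.1]; exact hmem.2))
  rw [← AddSubgroup.zmultiples_eq_closure] at hS ⊢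
  have ha : a ≠ 0 := by
    rintro rfl
    obtain ⟨t, ht, ht0⟩ := hS
    exact ht0 (by simpa using ht)
  refine ⟨|a|, abs_pos.2 ha, fun t => ?_⟩
  simp only [AddSubgroup.mem_zmultiples_iff, zsmul_eq_mul]
  rcases abs_choice a with h | h <;> rw [h]
  · exact ⟨fun ⟨k, hk⟩ => ⟨k, hk.symm⟩, fun ⟨k, hk⟩ => ⟨k, hk.symm⟩⟩
  · exact ⟨fun ⟨k, hk⟩ => ⟨-k, by push_cast; linarith⟩, fun ⟨k, hk⟩ => ⟨-k, by push_cast; linarith⟩⟩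

lemma IsFullLattice.exists_isolated {L : AddSubgroup V3} (hL : IsFullLattice L) :
    ∃ ε > 0, ∀ v ∈ L, ‖v‖ < ε → v = 0 := by
  obtain ⟨b, hb⟩ := hL
  have hLb : (L : Set V3) = Submodule.span ℤ (Set.range b) := by
    ext x
    rw [SetLike.mem_coe, hb, SetLike.mem_coe, Submodule.mem_span_range_iff_exists_fun]
    simp only [Int.cast_smul_eq_zsmul, eq_comm]
  have hdisc : IsDiscrete (L : Set V3) :=
    hLb ▸ SetLike.isDiscrete_iff_discreteTopology.2 inferInstance
  obtain ⟨ε, hε, hball⟩ := Metric.exists_ball_inter_eq_singleton_of_mem_discrete hdisc L.zero_mem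
  refine ⟨ε, hε, fun v hv hvε => ?_⟩
  have : v ∈ Metric.ball 0 ε ∩ (L : Set V3) := ⟨by simpa using hvε, hv⟩
  rwa [hball] at this

lemma IsFullLattice.exists_mem_apply_ne_zero {L : AddSubgroup V3} (hL : IsFullLattice L)
    (j : Fin 3) : ∃ v ∈ L, v j ≠ 0 := by
  obtain ⟨b, hb⟩ := hL
  by_contra! h
  have : (LinearMap.proj j : V3 →ₗ[ℝ] ℝ) = 0 :=
    b.ext fun i => h (b i) ((hb _).2 ⟨Pi.single i 1, by simp [Pi.single_apply]⟩)
  simpa using LinearMap.congr_fun this (Pi.single j 1)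

namespace DihedralLattice

def ζ : ℂ := ⟨1 / 2, √3 / 2⟩

@[simp] lemma ζ_re : ζ.re = 1 / 2 := rfl

@[simp] lemma ζ_im : ζ.im = √3 / 2 := rfl

lemma ζ_sq : ζ ^ 2 = ζ - 1 := by
  have h3 : √3 * √3 = 3 := Real.mul_self_sqrt (by norm_num)
  apply Complex.ext <;> simp [sq] <;> linarith

lemma conj_ζ : conj ζ = 1 - ζ := by
  apply Complex.ext <;> norm_num

lemma intCast_add_mul_ζ_inj {m n m' n' : ℤ} (h : (m + n * ζ : ℂ) = m' + n' * ζ) :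
    m = m' ∧ n = n' := by
  have him := congrArg Complex.im h
  have hre := congrArg Complex.re h
  simp only [Complex.add_im, Complex.add_re, Complex.mul_im, Complex.mul_re,
    Complex.intCast_re, Complex.intCast_im, ζ_re, ζ_im] at him hre
  have hn : (n : ℝ) = n' := by
    have : (0 : ℝ) < √3 := by positivity
    nlinarith
  have hm : (m : ℝ) = m' := by linarith
  exact ⟨mod_cast hm, mod_cast hn⟩

def eisensteinLattice (c : ℂ) : Set ℂ := {z | ∃ m n : ℤ, z = c * (m + n * ζ)}

lemma mul_mem_eisensteinLattice_iff {a : ℂ} (ha : a ≠ 0) (c z : ℂ) :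
    a * z ∈ eisensteinLattice (a * c) ↔ z ∈ eisensteinLattice c := by
  simp only [eisensteinLattice, Set.mem_ofPred_eq, mul_assoc, mul_right_inj' ha]

lemma eisensteinLattice_two_sub_ζ_subset : eisensteinLattice (2 - ζ) ⊆ eisensteinLattice 1 := by
  rintro z ⟨m, n, rfl⟩
  exact ⟨2 * m + n, n - m, by push_cast; linear_combination (-n : ℂ) * ζ_sq⟩

lemma mem_eisensteinLattice_of_conj_sub {p : ℂ} (h₁ : (2 - ζ) * p ∈ eisensteinLattice 1)
    (h₂ : conj p - p ∈ eisensteinLattice 1) : p ∈ eisensteinLattice 1 := by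
  obtain ⟨m₁, n₁, hp⟩ := h₁
  obtain ⟨m₂, n₂, hq⟩ := h₂
  -- `(2 - ζ)(1 + ζ) = 3`
  have h3p : 3 * p = (m₁ - n₁) + (m₁ + 2 * n₁) * ζ := by
    linear_combination (1 + ζ) * hp + (p + n₁) * ζ_sq
  have h3q : ((3 * m₂ : ℤ) : ℂ) + (3 * n₂ : ℤ) * ζ =
      (m₁ + 2 * n₁ : ℤ) + (-2 * (m₁ + 2 * n₁) : ℤ) * ζ := by
    have hc := congrArg conj h3p
    simp only [map_mul, map_add, map_sub, map_ofNat, map_intCast, conj_ζ] at hc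
    push_cast
    linear_combination -3 * hq + hc - h3p
  obtain ⟨hm, -⟩ := intCast_add_mul_ζ_inj h3q
  refine ⟨m₂ - n₁, m₂, ?_⟩
  have hm' : (3 * m₂ : ℂ) = m₁ + 2 * n₁ := by exact_mod_cast hm
  push_cast
  linear_combination h3p / 3 - hm' / 3 * (1 + ζ)

section Classification

variable {P : AddSubgroup ℂ}

lemma add_mul_ζ_mul_mem (hζ : ∀ z ∈ P, ζ * z ∈ P) (m n : ℤ) {z : ℂ} (hz : z ∈ P) :
    (m + n * ζ) * z ∈ P := by
  have := P.add_mem (P.zsmul_mem hz m) (P.zsmul_mem (hζ z hz) n)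
  rwa [zsmul_eq_mul, zsmul_eq_mul, ← mul_assoc, ← add_mul] at this

lemma eisensteinLattice_subset (hζ : ∀ z ∈ P, ζ * z ∈ P) {c : ℂ} (hc : c ∈ P) :
    eisensteinLattice c ⊆ P := by
  rintro z ⟨m, n, rfl⟩
  rw [mul_comm]
  exact add_mul_ζ_mul_mem hζ m n hc

lemma ofReal_two_mul_re_mem (hconj : ∀ z ∈ P, conj z ∈ P) {z : ℂ} (hz : z ∈ P) :
    ((2 * z.re : ℝ) : ℂ) ∈ P := by
  rw [← Complex.add_conj]
  exact P.add_mem hz (hconj z hz)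

lemma exists_ofReal_mem_ne_zero (hζ : ∀ z ∈ P, ζ * z ∈ P) (hconj : ∀ z ∈ P, conj z ∈ P)
    (hP : ∃ z ∈ P, z ≠ 0) : ∃ t : ℝ, (t : ℂ) ∈ P ∧ t ≠ 0 := by
  obtain ⟨z, hz, hz0⟩ := hP
  by_cases hre : z.re = 0
  · refine ⟨_, ofReal_two_mul_re_mem hconj (hζ z hz), ?_⟩
    have him : z.im ≠ 0 := fun him => hz0 (Complex.ext hre him)
    have : (0 : ℝ) < √3 := by positivity
    simp only [Complex.mul_re, ζ_re, ζ_im, hre]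
    intro h
    apply him
    nlinarith
  · exact ⟨_, ofReal_two_mul_re_mem hconj hz, by positivity⟩

/-- `z` is recovered from the real parts of `z` and `ζ z`, both in `(a / 2) ℤ`. -/
lemma subset_eisensteinLattice (hζ : ∀ z ∈ P, ζ * z ∈ P) (hconj : ∀ z ∈ P, conj z ∈ P) {a : ℝ}
    (ha : ∀ t : ℝ, (t : ℂ) ∈ P → ∃ k : ℤ, t = k * a) :
    (P : Set ℂ) ⊆ eisensteinLattice (a / 3 * (2 - ζ)) := by
  intro z hz
  obtain ⟨k₁, h₁⟩ := ha _ (ofReal_two_mul_re_mem hconj hz)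
  obtain ⟨k₂, h₂⟩ := ha _ (ofReal_two_mul_re_mem hconj (hζ z hz))
  have e₁ : z + conj z = k₁ * a := by rw [Complex.add_conj, h₁]; push_cast; ring
  have e₂ : ζ * z + (1 - ζ) * conj z = k₂ * a := by
    rw [← conj_ζ, ← map_mul, Complex.add_conj, h₂]; push_cast; ring
  refine ⟨k₂, k₁ - k₂, ?_⟩
  push_cast
  linear_combination (-(2 * ζ - 1) / 3) * e₂ + ((2 * ζ - 1) * (1 - ζ) / 3) * e₁
    + (4 * z / 3 - (k₁ + k₂) * a / 3) * ζ_sq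

theorem eq_eisensteinLattice_or (hζ : ∀ z ∈ P, ζ * z ∈ P) (hconj : ∀ z ∈ P, conj z ∈ P) {a : ℝ}
    (ha : ∀ t : ℝ, (t : ℂ) ∈ P ↔ ∃ k : ℤ, t = k * a) :
    (P : Set ℂ) = eisensteinLattice a ∨ (P : Set ℂ) = eisensteinLattice (a / 3 * (2 - ζ)) := by
  have hsub := subset_eisensteinLattice hζ hconj fun t ht => (ha t).1 ht
  have haP : (a : ℂ) ∈ P := (ha a).2 ⟨1, by simp⟩
  -- the quotient of the two candidate lattices is cyclic of order `3`, spanned by `g`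
  set g : ℂ := a / 3 * (1 + ζ) with hg_def
  have h3g : (3 : ℤ) • g ∈ P := by
    have := add_mul_ζ_mul_mem hζ 1 1 haP
    convert this using 1
    push_cast
    ring
  by_cases hg : g ∈ P
  · right
    refine hsub.antisymm (eisensteinLattice_subset hζ ?_)
    convert add_mul_ζ_mul_mem hζ 1 (-1) hg using 1
    push_cast
    linear_combination ((a : ℂ) / 3) * ζ_sq
  · left
    refine subset_antisymm ?_ (eisensteinLattice_subset hζ haP)
    intro z hz
    obtain ⟨m, n, rfl⟩ := hsub hz
    have hz' : (a / 3 * (2 - ζ) * (m + n * ζ) : ℂ) = m * a + (n - m) * g := by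
      linear_combination (-(a : ℂ) * n / 3) * ζ_sq
    obtain ⟨q, hq⟩ : 3 ∣ n - m := by
      by_contra h3
      refine hg (AddSubgroup.mem_of_zsmul_mem_of_not_three_dvd h3 ?_ h3g)
      have := P.sub_mem hz (P.zsmul_mem haP m)
      convert this using 1
      rw [hz', zsmul_eq_mul, zsmul_eq_mul]
      push_cast
      ring
    refine ⟨m + q, q, ?_⟩
    rw [hz', hg_def]
    have hq' : (n : ℂ) - m = 3 * q := by exact_mod_cast hq
    push_cast
    linear_combination (a / 3 * (1 + ζ) : ℂ) * hq'

end Classification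

def horiz : V3 →+ ℂ where
  toFun v := ⟨v 0, v 1⟩
  map_zero' := rfl
  map_add' _ _ := rfl

@[simp] lemma horiz_re (v : V3) : (horiz v).re = v 0 := rfl

@[simp] lemma horiz_im (v : V3) : (horiz v).im = v 1 := rfl

lemma ext_horiz {v w : V3} (h : horiz v = horiz w) (h2 : v 2 = w 2) : v = w := by
  funext i
  fin_cases i
  · exact congrArg Complex.re h
  · exact congrArg Complex.im h
  · exact h2

@[simp] lemma horiz_u₁ : horiz u₁ = 1 := by apply Complex.ext <;> simp [u₁]

@[simp] lemma horiz_u₂ : horiz u₂ = ζ := by apply Complex.ext <;> simp [u₂]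

@[simp] lemma horiz_e₃ : horiz e₃ = 0 := by apply Complex.ext <;> simp [e₃]

@[simp] lemma horiz_single_two (t : ℝ) : horiz (Pi.single 2 t) = 0 := by
  apply Complex.ext <;> simp

@[simp] lemma u₁_apply_two : u₁ 2 = 0 := rfl

@[simp] lemma u₂_apply_two : u₂ 2 = 0 := rfl

@[simp] lemma e₃_apply_two : e₃ 2 = 1 := rfl

def rot (v : V3) : V3 := reflPlaneU₂ (reflPlaneU₁ v)

lemma horiz_rot (v : V3) : horiz (rot v) = (ζ - 1) * horiz v := by
  apply Complex.ext <;> simp [rot, reflPlaneU₁, reflPlaneU₂] <;> ring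

@[simp] lemma rot_apply_two (v : V3) : rot v 2 = v 2 := rfl

lemma horiz_reflPlaneU₁ (v : V3) : horiz (reflPlaneU₁ v) = conj (horiz v) := by
  apply Complex.ext <;> simp [reflPlaneU₁]

@[simp] lemma reflPlaneU₁_apply_two (v : V3) : reflPlaneU₁ v 2 = v 2 := rfl

def horizSlice (M : AddSubgroup V3) : AddSubgroup ℂ where
  carrier := {z | ∃ v ∈ M, v 2 = 0 ∧ horiz v = z}
  add_mem' := by
    rintro _ _ ⟨v, hv, hv2, rfl⟩ ⟨w, hw, hw2, rfl⟩
    exact ⟨v + w, M.add_mem hv hw, by simp [hv2, hw2], map_add _ _ _⟩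
  zero_mem' := ⟨0, M.zero_mem, rfl, map_zero _⟩
  neg_mem' := by
    rintro _ ⟨v, hv, hv2, rfl⟩
    exact ⟨-v, M.neg_mem hv, by simp [hv2], map_neg _ _⟩

section Slice

variable {M : AddSubgroup V3}

lemma horiz_mem_horizSlice {v : V3} (hv : v ∈ M) (hv2 : v 2 = 0) : horiz v ∈ horizSlice M :=
  ⟨v, hv, hv2, rfl⟩

lemma mem_of_horiz_mem_horizSlice {v : V3} (hv : horiz v ∈ horizSlice M) (hv2 : v 2 = 0) :
    v ∈ M := by
  obtain ⟨w, hw, hw2, hwv⟩ := hv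
  rwa [← ext_horiz hwv (hw2.trans hv2.symm)]

lemma mul_ζ_mem_horizSlice (hρ : ∀ v ∈ M, rot v ∈ M) {z : ℂ} (hz : z ∈ horizSlice M) :
    ζ * z ∈ horizSlice M := by
  obtain ⟨v, hv, hv2, rfl⟩ := hz
  exact ⟨v + rot v, M.add_mem hv (hρ v hv), by simp [hv2], by rw [map_add, horiz_rot]; ring⟩

lemma conj_mem_horizSlice (hσ : ∀ v ∈ M, reflPlaneU₁ v ∈ M) {z : ℂ} (hz : z ∈ horizSlice M) :
    conj z ∈ horizSlice M := by
  obtain ⟨v, hv, hv2, rfl⟩ := hz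
  exact ⟨reflPlaneU₁ v, hσ v hv, by simp [hv2], horiz_reflPlaneU₁ v⟩

lemma two_sub_ζ_mul_horiz_mem (hρ : ∀ v ∈ M, rot v ∈ M) {v : V3} (hv : v ∈ M) :
    (2 - ζ) * horiz v ∈ horizSlice M :=
  ⟨v - rot v, M.sub_mem hv (hρ v hv), by simp, by rw [map_sub, horiz_rot]; ring⟩

lemma conj_horiz_sub_horiz_mem (hσ : ∀ v ∈ M, reflPlaneU₁ v ∈ M) {v : V3} (hv : v ∈ M) :
    conj (horiz v) - horiz v ∈ horizSlice M :=
  ⟨reflPlaneU₁ v - v, M.sub_mem (hσ v hv) hv, by simp, by rw [map_sub, horiz_reflPlaneU₁]⟩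

/-- `v + ρ v + ρ² v` is vertical because `1 + ω + ω² = 0` for `ω = ζ - 1`. -/
lemma single_three_mul_mem (hρ : ∀ v ∈ M, rot v ∈ M) {v : V3} (hv : v ∈ M) :
    Pi.single 2 (3 * v 2) ∈ M := by
  have hsum : v + rot v + rot (rot v) = Pi.single 2 (3 * v 2) := by
    refine ext_horiz ?_ (by simp; ring)
    simp only [map_add, horiz_rot, horiz_single_two]
    linear_combination horiz v * ζ_sq
  exact hsum ▸ M.add_mem (M.add_mem hv (hρ v hv)) (hρ _ (hρ v hv))

end Slice

section Lattice

variable {L : AddSubgroup V3} {ε : ℝ}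

theorem exists_horizSlice_eq (hρ : ∀ v ∈ L, rot v ∈ L) (hσ : ∀ v ∈ L, reflPlaneU₁ v ∈ L)
    (hε : 0 < ε) (hd : ∀ v ∈ L, ‖v‖ < ε → v = 0) (hL : ∃ v ∈ L, v 0 ≠ 0) :
    ∃ a : ℝ, 0 < a ∧ ∃ c : ℂ, (c = 1 ∨ c = 2 - ζ) ∧
      (horizSlice L : Set ℂ) = eisensteinLattice (a * c) := by
  have hζ : ∀ z ∈ horizSlice L, ζ * z ∈ horizSlice L := fun _ => mul_ζ_mem_horizSlice hρ
  have hconj : ∀ z ∈ horizSlice L, conj z ∈ horizSlice L := fun _ => conj_mem_horizSlice hσ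
  have hne : ∃ z ∈ horizSlice L, z ≠ 0 := by
    obtain ⟨v, hv, hv0⟩ := hL
    refine ⟨_, two_sub_ζ_mul_horiz_mem hρ hv, mul_ne_zero ?_ ?_⟩
    · intro h
      have := congrArg Complex.im h
      simp at this
    · exact fun h => hv0 (by simpa using congrArg Complex.re h)
  obtain ⟨a, ha, hreal⟩ := AddSubgroup.exists_pos_mem_iff_of_isolated
    ((horizSlice L).comap Complex.ofRealHom.toAddMonoidHom)
    (exists_ofReal_mem_ne_zero hζ hconj hne) hε fun t ⟨v, hv, hv2, hvt⟩ htε => by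
      have hv1 : v 1 = 0 := by simpa using congrArg Complex.im hvt
      have hv0 : v 0 = t := by simpa using congrArg Complex.re hvt
      have := hd v hv <| (pi_norm_lt_iff hε).2 fun i => by
        fin_cases i <;> simp [hv0, hv1, hv2, hε, htε]
      simpa [this] using hv0.symm
  rcases eq_eisensteinLattice_or hζ hconj hreal with h | h
  · exact ⟨a, ha, 1, .inl rfl, by rw [h, mul_one]⟩
  · exact ⟨a / 3, by positivity, 2 - ζ, .inr rfl, by rw [h]; push_cast; rfl⟩

theorem exists_heights_eq (hρ : ∀ v ∈ L, rot v ∈ L) (hε : 0 < ε)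
    (hd : ∀ v ∈ L, ‖v‖ < ε → v = 0) (hL : ∃ v ∈ L, v 2 ≠ 0) :
    ∃ b > 0, (∀ v ∈ L, ∃ k : ℤ, v 2 = k * b) ∧ ∃ w ∈ L, w 2 = b := by
  obtain ⟨v, hv, hv2⟩ := hL
  obtain ⟨g, hg, hvert⟩ := AddSubgroup.exists_pos_mem_iff_of_isolated
    (L.comap (AddMonoidHom.single (fun _ : Fin 3 => ℝ) 2))
    ⟨3 * v 2, single_three_mul_mem hρ hv, by simpa using hv2⟩
    hε fun t ht htε => by
      have := hd _ ht (by rwa [AddMonoidHom.single_apply, Pi.norm_single, Real.norm_eq_abs])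
      simpa using congrFun this 2
  obtain ⟨b, hb, hheights⟩ := AddSubgroup.exists_pos_mem_iff_of_isolated
    (L.map (Pi.evalAddMonoidHom _ 2)) ⟨v 2, ⟨v, hv, rfl⟩, hv2⟩ (by positivity : 0 < g / 3)
    fun _ ⟨u, hu, hut⟩ htg => by
      subst hut
      obtain ⟨k, hk⟩ := (hvert _).1 (single_three_mul_mem hρ hu)
      change |u 2| < g / 3 at htg
      obtain ⟨hlt, hgt⟩ := abs_lt.1 htg
      have hk1 : (k : ℝ) < 1 := by nlinarith
      have hk2 : -1 < (k : ℝ) := by nlinarith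
      have hk0 : k = 0 := by
        have : k < 1 := by exact_mod_cast hk1
        have : -1 < k := by exact_mod_cast hk2
        omega
      simpa [hk0] using hk
  obtain ⟨w, hw, hwb⟩ := (hheights b).2 ⟨1, by simp⟩
  exact ⟨b, hb, fun u hu => (hheights _).1 ⟨u, hu, rfl⟩, w, hw, hwb⟩

end Lattice

lemma exists_sub_horiz_mem_eisensteinLattice {p : ℂ} (hp : p ∈ eisensteinLattice 1) :
    ∃ T ∈ ({e₃, u₁ + e₃, u₂ + e₃} : Set V3), p - horiz T ∈ eisensteinLattice (2 - ζ) := by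
  obtain ⟨x, y, rfl⟩ := hp
  obtain ⟨q, hq⟩ : ∃ q, x - y = 3 * q ∨ x - y = 3 * q + 1 ∨ x - y = 3 * q + 2 :=
    ⟨(x - y) / 3, by omega⟩
  rcases hq with hq | hq | hq
  · refine ⟨e₃, by simp, q, y + q, ?_⟩
    have : (x : ℂ) = 3 * q + y := by exact_mod_cast (by omega : x = 3 * q + y)
    simp only [horiz_e₃]
    push_cast
    linear_combination this + (y + q) * ζ_sq
  · refine ⟨u₁ + e₃, by simp, q, y + q, ?_⟩
    have : (x : ℂ) = 3 * q + y + 1 := by exact_mod_cast (by omega : x = 3 * q + y + 1)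
    simp only [map_add, horiz_u₁, horiz_e₃]
    push_cast
    linear_combination this + (y + q) * ζ_sq
  · refine ⟨u₂ + e₃, by simp, q + 1, y + q, ?_⟩
    have : (x : ℂ) = 3 * q + y + 2 := by exact_mod_cast (by omega : x = 3 * q + y + 2)
    simp only [map_add, horiz_u₂, horiz_e₃]
    push_cast
    linear_combination this + (y + q) * ζ_sq

section Normalized

variable {M : AddSubgroup V3}

theorem coe_eq_of_horizontal {g₁ g₂ T : V3} (hg₁ : g₁ ∈ M) (hg₂ : g₂ ∈ M) (hT : T ∈ M)
    (hT2 : T 2 = 1) (hZ : ∀ v ∈ M, ∃ k : ℤ, v 2 = k)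
    (hhor : ∀ v ∈ M, v 2 = 0 → ∃ m n : ℤ, v = m • g₁ + n • g₂) :
    (M : Set V3) = {x | ∃ m n k : ℤ, x = m • g₁ + n • g₂ + k • T} := by
  ext x
  constructor
  · intro hx
    obtain ⟨k, hk⟩ := hZ x hx
    obtain ⟨m, n, hmn⟩ :=
      hhor (x - k • T) (M.sub_mem hx (M.zsmul_mem hT k)) (by simp [hk, hT2])
    exact ⟨m, n, k, by rw [← hmn, sub_add_cancel]⟩
  · rintro ⟨m, n, k, rfl⟩
    exact M.add_mem (M.add_mem (M.zsmul_mem hg₁ m) (M.zsmul_mem hg₂ n)) (M.zsmul_mem hT k)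

lemma coe_eq_triLat (hP : (horizSlice M : Set ℂ) = eisensteinLattice 1)
    (hZ : ∀ v ∈ M, ∃ k : ℤ, v 2 = k) (he₃ : e₃ ∈ M) : (M : Set V3) = triLat := by
  have hu₁ : u₁ ∈ M := mem_of_horiz_mem_horizSlice (by
    rw [← SetLike.mem_coe, hP, horiz_u₁]; exact ⟨1, 0, by simp⟩) rfl
  have hu₂ : u₂ ∈ M := mem_of_horiz_mem_horizSlice (by
    rw [← SetLike.mem_coe, hP, horiz_u₂]; exact ⟨0, 1, by simp⟩) rfl
  refine coe_eq_of_horizontal hu₁ hu₂ he₃ rfl hZ fun v hv hv2 => ?_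
  obtain ⟨m, n, h⟩ : horiz v ∈ eisensteinLattice 1 := hP ▸ horiz_mem_horizSlice hv hv2
  refine ⟨m, n, ext_horiz ?_ (by simp [hv2])⟩
  rw [map_add, map_zsmul, map_zsmul, horiz_u₁, horiz_u₂, h, zsmul_eq_mul, zsmul_eq_mul]
  ring

lemma coe_eq_centred (hP : (horizSlice M : Set ℂ) = eisensteinLattice (2 - ζ))
    (hZ : ∀ v ∈ M, ∃ k : ℤ, v 2 = k) {T : V3} (hT : T ∈ M) (hT2 : T 2 = 1) :
    (M : Set V3) = {x | ∃ m n k : ℤ, x = m • (u₁ + u₂) + n • ((2 : ℤ) • u₁ - u₂) + k • T} := by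
  have hg₁ : u₁ + u₂ ∈ M := mem_of_horiz_mem_horizSlice (by
    rw [← SetLike.mem_coe, hP]
    exact ⟨0, 1, by simp; linear_combination ζ_sq⟩) (by simp)
  have hg₂ : (2 : ℤ) • u₁ - u₂ ∈ M := mem_of_horiz_mem_horizSlice (by
    rw [← SetLike.mem_coe, hP]
    exact ⟨1, 0, by rw [map_sub, map_zsmul, horiz_u₁, horiz_u₂]; push_cast; ring⟩) (by simp)
  refine coe_eq_of_horizontal hg₁ hg₂ hT hT2 hZ fun v hv hv2 => ?_
  obtain ⟨m, n, h⟩ : horiz v ∈ eisensteinLattice (2 - ζ) := hP ▸ horiz_mem_horizSlice hv hv2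
  refine ⟨n, m, ext_horiz ?_ (by simp [hv2])⟩
  rw [h, map_add, map_zsmul, map_zsmul, map_add, map_sub, map_zsmul, horiz_u₁, horiz_u₂,
    zsmul_eq_mul, zsmul_eq_mul, zsmul_eq_mul]
  push_cast
  linear_combination (-n : ℂ) * ζ_sq

theorem mem_lattices_of_normalized (hρ : ∀ v ∈ M, rot v ∈ M)
    (hσ : ∀ v ∈ M, reflPlaneU₁ v ∈ M) {c : ℂ} (hc : c = 1 ∨ c = 2 - ζ)
    (hP : (horizSlice M : Set ℂ) = eisensteinLattice c) (hZ : ∀ v ∈ M, ∃ k : ℤ, v 2 = k)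
    {w : V3} (hw : w ∈ M) (hw2 : w 2 = 1) :
    (M : Set V3) ∈ ({triLat, triCentredLat, triCentredLatU₁, triCentredLatU₂} : Set (Set V3)) := by
  have hE : ∀ z ∈ horizSlice M, z ∈ eisensteinLattice 1 := fun z hz => by
    rw [← SetLike.mem_coe, hP] at hz
    rcases hc with rfl | rfl
    exacts [hz, eisensteinLattice_two_sub_ζ_subset hz]
  have hp : horiz w ∈ eisensteinLattice 1 := mem_eisensteinLattice_of_conj_sub
    (hE _ (two_sub_ζ_mul_horiz_mem hρ hw)) (hE _ (conj_horiz_sub_horiz_mem hσ hw))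
  have hT : ∀ {T : V3}, T 2 = 1 → horiz w - horiz T ∈ horizSlice M → T ∈ M := fun hT2 hwT => by
    obtain ⟨v, hv, hv2, hvw⟩ := hwT
    convert M.sub_mem hw hv using 1
    exact ext_horiz (by rw [map_sub, hvw]; ring) (by simp [hv2, hw2, hT2])
  rcases hc with rfl | rfl
  · refine .inl (coe_eq_triLat hP hZ (hT rfl ?_))
    rwa [horiz_e₃, sub_zero, ← SetLike.mem_coe, hP]
  · obtain ⟨T, hTs, hwT⟩ := exists_sub_horiz_mem_eisensteinLattice hp
    have hT2 : T 2 = 1 := by rcases hTs with rfl | rfl | rfl <;> simp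
    rw [coe_eq_centred hP hZ (hT hT2 (by rwa [← SetLike.mem_coe, hP])) hT2]
    rcases hTs with rfl | rfl | rfl
    exacts [.inr (.inl rfl), .inr (.inr (.inl rfl)), .inr (.inr (.inr rfl))]

end Normalized

def stretch (a b : ℝ) : V3 →+ V3 where
  toFun x := ![a * x 0, a * x 1, b * x 2]
  map_zero' := by ext i; fin_cases i <;> simp
  map_add' x y := by ext i; fin_cases i <;> simp <;> ring

section Stretch

variable {a b : ℝ}

lemma horiz_stretch (x : V3) : horiz (stretch a b x) = a * horiz x := by
  apply Complex.ext <;> simp [stretch]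

@[simp] lemma stretch_apply_two (x : V3) : stretch a b x 2 = b * x 2 := rfl

lemma rot_stretch (x : V3) : rot (stretch a b x) = stretch a b (rot x) :=
  ext_horiz (by simp only [horiz_rot, horiz_stretch]; ring) rfl

lemma reflPlaneU₁_stretch (x : V3) : reflPlaneU₁ (stretch a b x) = stretch a b (reflPlaneU₁ x) :=
  ext_horiz (by simp [horiz_reflPlaneU₁, horiz_stretch]) rfl

lemma stretch_stretch_inv (ha : a ≠ 0) (hb : b ≠ 0) (x : V3) :
    stretch a b (stretch a⁻¹ b⁻¹ x) = x :=
  ext_horiz (by simp [horiz_stretch, ha]) (by simp [hb])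

lemma mem_horizSlice_comap_stretch {L : AddSubgroup V3} (ha : a ≠ 0) (hb : b ≠ 0) {z : ℂ} :
    z ∈ horizSlice (L.comap (stretch a b)) ↔ (a : ℂ) * z ∈ horizSlice L := by
  constructor
  · rintro ⟨v, hv, hv2, rfl⟩
    exact ⟨stretch a b v, hv, by simp [hv2], horiz_stretch v⟩
  · rintro ⟨w, hw, hw2, hwz⟩
    refine ⟨stretch a⁻¹ b⁻¹ w, ?_, by simp [hw2], ?_⟩
    · rwa [AddSubgroup.mem_comap, stretch_stretch_inv ha hb]
    · rw [horiz_stretch, hwz, ← mul_assoc, ← Complex.ofReal_mul, inv_mul_cancel₀ ha,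
        Complex.ofReal_one, one_mul]

theorem comap_stretch_mem_lattices {L : AddSubgroup V3} (hρ : ∀ v ∈ L, rot v ∈ L)
    (hσ : ∀ v ∈ L, reflPlaneU₁ v ∈ L) (ha : a ≠ 0) (hb : b ≠ 0) {c : ℂ} (hc : c = 1 ∨ c = 2 - ζ)
    (hP : (horizSlice L : Set ℂ) = eisensteinLattice (a * c)) (hZ : ∀ v ∈ L, ∃ k : ℤ, v 2 = k * b)
    {w : V3} (hw : w ∈ L) (hw2 : w 2 = b) :
    (L.comap (stretch a b) : Set V3) ∈
      ({triLat, triCentredLat, triCentredLatU₁, triCentredLatU₂} : Set (Set V3)) := by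
  refine mem_lattices_of_normalized (fun v hv => ?_) (fun v hv => ?_) hc ?_ (fun v hv => ?_)
    (w := stretch a⁻¹ b⁻¹ w) ?_ ?_
  · simpa [AddSubgroup.mem_comap, ← rot_stretch] using hρ _ hv
  · simpa [AddSubgroup.mem_comap, ← reflPlaneU₁_stretch] using hσ _ hv
  · ext z
    rw [SetLike.mem_coe, mem_horizSlice_comap_stretch ha hb, ← SetLike.mem_coe, hP,
      mul_mem_eisensteinLattice_iff (by exact_mod_cast ha)]
  · obtain ⟨k, hk⟩ := hZ _ hv
    exact ⟨k, mul_right_cancel₀ hb (by simpa [mul_comm] using hk)⟩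
  · rwa [AddSubgroup.mem_comap, stretch_stretch_inv ha hb]
  · simp [hw2, hb]

end Stretch

end DihedralLattice

open DihedralLattice in
/-- A full-rank lattice in `ℝ³` preserved by the group `D̃₃` generated by
the reflections in the planes spanned by `u₁, e₃` and by `u₂, e₃` is the image under a
diagonal map `D = diag(a, a, b)` (with `a, b > 0`) of one of four explicit lattices. -/
theorem statement14 (L : AddSubgroup V3) (hL : IsFullLattice L)
    (h₁ : reflPlaneU₁ '' (L : Set V3) = (L : Set V3))
    (h₂ : reflPlaneU₂ '' (L : Set V3) = (L : Set V3)) :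
    ∃ a b : ℝ, 0 < a ∧ 0 < b ∧
      ((fun x : V3 => ![a * x 0, a * x 1, b * x 2]) ⁻¹' (L : Set V3)) ∈
        ({triLat, triCentredLat, triCentredLatU₁, triCentredLatU₂} : Set (Set V3)) := by
  obtain ⟨ε, hε, hd⟩ := hL.exists_isolated
  have hσ : ∀ v ∈ L, reflPlaneU₁ v ∈ L := fun v hv => by
    rw [← SetLike.mem_coe, ← h₁]
    exact Set.mem_image_of_mem _ hv
  have hρ : ∀ v ∈ L, rot v ∈ L := fun v hv => by
    rw [← SetLike.mem_coe, ← h₂]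
    exact Set.mem_image_of_mem _ (hσ v hv)
  obtain ⟨a, ha, c, hc, hP⟩ := exists_horizSlice_eq hρ hσ hε hd (hL.exists_mem_apply_ne_zero 0)
  obtain ⟨b, hb, hZ, w, hw, hw2⟩ := exists_heights_eq hρ hε hd (hL.exists_mem_apply_ne_zero 2)
  exact ⟨a, b, ha, hb, comap_stretch_mem_lattices hρ hσ ha.ne' hb.ne' hc hP hZ hw hw2⟩
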